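/- arXiv:math/0604280 — 4 statements merged into one kernel-verified Lean document; each statement's English description precedes it below -/
import Mathlib

section
/- Let s(0,·) : ℤ → ℝ have finite support, let α, β ∈ ℝ, and define s(n,k) = α·s(n-1,k-1) + β·s(n-1,k) + α·s(n-1,k+1) for n ≥ 1. Then for any k₀ ∈ ℤ and k₁ ∈ ℕ, the sequence d_n = Σ_{j ∈ ℤ} [ s(n, k₀-5j) - s(n, k₀-5j-k₁) ] satisfies d_n = (2β - α)·d_{n-1} + (αβ + α² - β²)·d_{n-2} for all n ≥ 2. -/
/-- The corollary: with the same setup, sums of differences at distance `k₁`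
satisfy the same second-order recurrence. -/
theorem main_corollary (α β : ℝ) (s : ℕ → ℤ → ℝ)
    (h0 : (Function.support (s 0)).Finite)
    (hrec : ∀ n : ℕ, 1 ≤ n → ∀ k : ℤ,
      s n k = α * s (n - 1) (k - 1) + β * s (n - 1) k + α * s (n - 1) (k + 1))
    (k₀ : ℤ) (k₁ : ℕ)
    (d : ℕ → ℝ)
    (hd : ∀ n : ℕ, d n = ∑ᶠ j : ℤ, (s n (k₀ - 5 * j) - s n (k₀ - 5 * j - k₁))) :
    ∀ n : ℕ, 2 ≤ n →
      d n = (2 * β - α) * d (n - 1) + (α * β + α ^ 2 - β ^ 2) * d (n - 2) := by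
  -- every row has finite support
  have hfin : ∀ n, (Function.support (s n)).Finite := by
    intro n
    induction n with
    | zero => exact h0
    | succ p ih =>
      have hsub : Function.support (s (p + 1)) ⊆
          ((fun k : ℤ => k - 1) ⁻¹' Function.support (s p)) ∪
            (Function.support (s p) ∪ ((fun k : ℤ => k + 1) ⁻¹' Function.support (s p))) := by
        intro k hk
        by_contra hc
        simp only [Set.mem_union, Set.mem_preimage, Function.mem_support, not_or, not_not] at hc
        apply hk
        have h := hrec (p + 1) (by omega) k
        simp only [Nat.add_sub_cancel] at h
        simp [Function.mem_support, h, hc.1, hc.2.1, hc.2.2]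
      refine Set.Finite.subset ?_ hsub
      refine Set.Finite.union (Set.Finite.preimage ?_ ih) (Set.Finite.union ih
        (Set.Finite.preimage ?_ ih)) <;>
        exact Function.Injective.injOn (fun a b hab => by omega)
  -- finite support in j
  have hfinj : ∀ n (m : ℤ), (Function.support (fun j : ℤ => s n (m - 5 * j))).Finite := by
    intro n m
    have : Function.support (fun j : ℤ => s n (m - 5 * j)) =
        (fun j : ℤ => m - 5 * j) ⁻¹' Function.support (s n) := rfl
    rw [this]
    exact Set.Finite.preimage (Function.Injective.injOn (fun a b hab => by omega)) (hfin n)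
  set F : ℕ → ℤ → ℝ := fun n m => ∑ᶠ j : ℤ, s n (m - 5 * j) with hF
  -- F satisfies the recurrence
  have hFrec : ∀ n : ℕ, 1 ≤ n → ∀ m : ℤ,
      F n m = α * F (n - 1) (m - 1) + β * F (n - 1) m + α * F (n - 1) (m + 1) := by
    intro n hn m
    have h1 : (fun j : ℤ => s n (m - 5 * j)) = fun j : ℤ =>
        α * s (n - 1) ((m - 1) - 5 * j) + (β * s (n - 1) (m - 5 * j)
          + α * s (n - 1) ((m + 1) - 5 * j)) := by
      funext j
      rw [hrec n hn (m - 5 * j)]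
      ring_nf
    have fs1 : (Function.support fun j : ℤ => α * s (n - 1) ((m - 1) - 5 * j)).Finite :=
      (hfinj (n - 1) (m - 1)).subset (fun j hj => by
        simp only [Function.mem_support] at *; exact fun h => hj (by rw [h]; ring))
    have fs2 : (Function.support fun j : ℤ => β * s (n - 1) (m - 5 * j)).Finite :=
      (hfinj (n - 1) m).subset (fun j hj => by
        simp only [Function.mem_support] at *; exact fun h => hj (by rw [h]; ring))
    have fs3 : (Function.support fun j : ℤ => α * s (n - 1) ((m + 1) - 5 * j)).Finite :=
      (hfinj (n - 1) (m + 1)).subset (fun j hj => by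
        simp only [Function.mem_support] at *; exact fun h => hj (by rw [h]; ring))
    calc F n m = ∑ᶠ j : ℤ, (α * s (n - 1) ((m - 1) - 5 * j) + (β * s (n - 1) (m - 5 * j)
          + α * s (n - 1) ((m + 1) - 5 * j))) := by rw [hF]; exact congrArg _ h1
      _ = (∑ᶠ j : ℤ, α * s (n - 1) ((m - 1) - 5 * j)) + ((∑ᶠ j : ℤ, β * s (n - 1) (m - 5 * j))
          + ∑ᶠ j : ℤ, α * s (n - 1) ((m + 1) - 5 * j)) := by
        rw [finsum_add_distrib fs1 (fs2.union fs3 |>.subset (Function.support_add _ _)),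
          finsum_add_distrib fs2 fs3]
      _ = α * F (n - 1) (m - 1) + β * F (n - 1) m + α * F (n - 1) (m + 1) := by
        rw [hF, ← mul_finsum, ← mul_finsum,
          ← mul_finsum]
        ring
  -- F is 5-periodic
  have hFper : ∀ n (m : ℤ), F n (m + 5) = F n m := by
    intro n m
    show (∑ᶠ j : ℤ, s n ((m + 5) - 5 * j)) = ∑ᶠ j : ℤ, s n (m - 5 * j)
    have : (fun j : ℤ => s n ((m + 5) - 5 * j)) = fun j : ℤ =>
        (fun j' : ℤ => s n (m - 5 * j')) ((Equiv.subRight (1 : ℤ)) j) := by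
      funext j; simp [Equiv.subRight]; ring_nf
    rw [this]
    exact finsum_comp_equiv (Equiv.subRight (1 : ℤ)) (f := fun j' : ℤ => s n (m - 5 * j'))
  -- d in terms of F
  have hdF : ∀ n, d n = F n k₀ - F n (k₀ - k₁) := by
    intro n
    rw [hd n]
    have h1 : (fun j : ℤ => s n (k₀ - 5 * j) - s n (k₀ - 5 * j - k₁)) =
        fun j : ℤ => s n (k₀ - 5 * j) - s n ((k₀ - k₁) - 5 * j) := by
      funext j; ring_nf
    rw [h1, finsum_sub_distrib (hfinj n k₀) (hfinj n (k₀ - k₁))]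
  intro n hn
  obtain ⟨q, rfl⟩ : ∃ q, n = q + 2 := ⟨n - 2, by omega⟩
  simp only [Nat.add_sub_cancel, show q + 2 - 1 = q + 1 from rfl]
  -- two-step expansion
  have h2 : ∀ x : ℤ, F (q + 2) x = α ^ 2 * F q (x - 2) + 2 * α * β * F q (x - 1)
      + (2 * α ^ 2 + β ^ 2) * F q x + 2 * α * β * F q (x + 1) + α ^ 2 * F q (x + 2) := by
    intro x
    rw [hFrec (q + 2) (by omega) x]
    simp only [Nat.add_sub_cancel, show q + 2 - 1 = q + 1 from rfl]
    rw [hFrec (q + 1) (by omega) (x - 1), hFrec (q + 1) (by omega) x,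
      hFrec (q + 1) (by omega) (x + 1)]
    simp only [Nat.add_sub_cancel]
    have e1 : x - 1 - 1 = x - 2 := by ring
    have e2 : x - 1 + 1 = x := by ring
    have e3 : x + 1 - 1 = x := by ring
    have e4 : x + 1 + 1 = x + 2 := by ring
    rw [e1, e2, e3, e4]
    ring
  -- the 5-window sum is constant
  set G : ℤ → ℝ := fun x => F q (x - 2) + F q (x - 1) + F q x + F q (x + 1) + F q (x + 2)
    with hG
  have hGstep : ∀ x : ℤ, G (x + 1) = G x := by
    intro x
    have e1 : x + 1 - 2 = x - 1 := by ring
    have e2 : x + 1 - 1 = x := by ring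
    have e3 : x + 1 + 1 = x + 2 := by ring
    have e4 : x + 1 + 2 = (x - 2) + 5 := by ring
    rw [hG]
    simp only [e1, e2, e3, e4, hFper]
    ring
  have hGconst : ∀ (x : ℤ) (k : ℕ), G (x - k) = G x := by
    intro x k
    induction k with
    | zero => simp
    | succ p ih =>
      have : x - (↑(p + 1) : ℤ) = (x - p) - 1 := by push_cast; ring
      rw [this, ← ih]
      have := hGstep ((x - p) - 1)
      simpa using this.symm
  have hGk : G k₀ = G (k₀ - k₁) := (hGconst k₀ k₁).symm
  rw [hdF (q + 2), hdF (q + 1), hdF q, h2 k₀, h2 (k₀ - k₁),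
    hFrec (q + 1) (by omega) k₀, hFrec (q + 1) (by omega) (k₀ - k₁)]
  simp only [Nat.add_sub_cancel]
  rw [hG] at hGk
  linear_combination α ^ 2 * hGk
end

section
/- For every natural number n ≥ 1, F_n = Σ_{j ∈ ℤ} [ T(n+1, 5j) - T(n+1, 5j-1) ], where T(n,k) denotes the trinomial coefficient. -/
/-- The trinomial coefficient `T(n,k)`: the coefficient of `x^(n+k)` in `(1+x+x²)^n`,
zero when `n + k < 0`. -/
noncomputable def trinom (n : ℕ) (k : ℤ) : ℤ :=
  if 0 ≤ (n : ℤ) + k then ((1 + Polynomial.X + Polynomial.X ^ 2 : Polynomial ℤ) ^ n).coeff ((n : ℤ) + k).toNat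
  else 0

open Polynomial Finset

noncomputable def tgen : AddMonoidAlgebra ℤ (ZMod 5) := AddMonoidAlgebra.single 1 1

noncomputable def S (m : ℕ) (r : ZMod 5) : ℤ :=
  (Polynomial.aeval tgen ((1 + X + X ^ 2 : Polynomial ℤ) ^ m)).coeff r

lemma natDeg_lt (m : ℕ) : ((1 + X + X ^ 2 : Polynomial ℤ) ^ m).natDegree < 2 * m + 1 := by
  have h1 : (1 + X + X ^ 2 : Polynomial ℤ).natDegree ≤ 2 := by
    compute_degree
  have := Polynomial.natDegree_pow_le (p := (1 + X + X ^ 2 : Polynomial ℤ)) (n := m)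
  nlinarith

lemma coeff_zero_of_big (m i : ℕ) (hi : 2 * m < i) :
    ((1 + X + X ^ 2 : Polynomial ℤ) ^ m).coeff i = 0 := by
  apply Polynomial.coeff_eq_zero_of_natDegree_lt
  have := natDeg_lt m; omega

lemma S_eq_sum (m : ℕ) (r : ZMod 5) :
    S m r = ∑ i ∈ range (2 * m + 1),
      if ((i : ZMod 5) = r) then ((1 + X + X ^ 2 : Polynomial ℤ) ^ m).coeff i else 0 := by
  unfold S
  rw [aeval_eq_sum_range' (natDeg_lt m) tgen, AddMonoidAlgebra.coeff_sum, Finsupp.finset_sum_apply]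
  apply Finset.sum_congr rfl
  intro i _
  rw [tgen, AddMonoidAlgebra.single_pow]
  rw [AddMonoidAlgebra.coeff_smul, AddMonoidAlgebra.coeff_single, Finsupp.smul_apply, Finsupp.single_apply]
  simp only [one_pow, nsmul_eq_mul, mul_one]
  split_ifs <;> simp

lemma S_succ (m : ℕ) (r : ZMod 5) :
    S (m + 1) r = S m r + S m (r - 1) + S m (r - 2) := by
  unfold S
  rw [pow_succ, map_mul]
  have hP : (Polynomial.aeval tgen (1 + X + X ^ 2 : Polynomial ℤ)) =
      AddMonoidAlgebra.single (0 : ZMod 5) (1 : ℤ) + AddMonoidAlgebra.single 1 1 +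
        AddMonoidAlgebra.single 2 1 := by
    rw [map_add, map_add, map_one, aeval_X, map_pow, aeval_X]
    rw [tgen, AddMonoidAlgebra.single_pow, AddMonoidAlgebra.one_def]
    norm_num
  rw [hP, mul_add, mul_add]
  rw [AddMonoidAlgebra.coeff_add, AddMonoidAlgebra.coeff_add, Finsupp.add_apply, Finsupp.add_apply]
  rw [AddMonoidAlgebra.coeff_mul_single_apply, AddMonoidAlgebra.coeff_mul_single_apply,
    AddMonoidAlgebra.coeff_mul_single_apply]
  simp [sub_zero, mul_one, sub_eq_add_neg]

/-- state vector: (center, off-by-one, off-by-two) residue sums -/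
def abg : ℕ → ℤ × ℤ × ℤ
  | 0 => (1, 0, 0)
  | m + 1 => ((abg m).1 + 2 * (abg m).2.1,
              (abg m).1 + (abg m).2.1 + (abg m).2.2,
              (abg m).2.1 + 2 * (abg m).2.2)

lemma quint (m : ℕ) :
    S m (m : ZMod 5) = (abg m).1 ∧
    S m ((m : ZMod 5) + 1) = (abg m).2.1 ∧
    S m ((m : ZMod 5) - 1) = (abg m).2.1 ∧
    S m ((m : ZMod 5) + 2) = (abg m).2.2 ∧
    S m ((m : ZMod 5) - 2) = (abg m).2.2 := by
  induction m with
  | zero =>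
    have h0 : ∀ r : ZMod 5, S 0 r = (AddMonoidAlgebra.single (0 : ZMod 5) (1 : ℤ)).coeff r := by
      intro r; unfold S; rw [pow_zero, map_one, AddMonoidAlgebra.one_def]
    refine ⟨?_, ?_, ?_, ?_, ?_⟩ <;>
      simp [h0, Finsupp.single_apply, abg] <;> decide
  | succ m ih =>
    obtain ⟨h0, h1, h1', h2, h2'⟩ := ih
    have hc : ((m + 1 : ℕ) : ZMod 5) = (m : ZMod 5) + 1 := by push_cast; ring
    have five : (5 : ZMod 5) = 0 := by decide
    refine ⟨?_, ?_, ?_, ?_, ?_⟩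
    · rw [hc, S_succ,
        show (m : ZMod 5) + 1 - 1 = (m : ZMod 5) by ring,
        show (m : ZMod 5) + 1 - 2 = (m : ZMod 5) - 1 by ring,
        h1, h0, h1']
      simp [abg]; try ring
    · rw [hc, S_succ,
        show (m : ZMod 5) + 1 + 1 - 1 = (m : ZMod 5) + 1 by ring,
        show (m : ZMod 5) + 1 + 1 - 2 = (m : ZMod 5) by ring,
        show (m : ZMod 5) + 1 + 1 = (m : ZMod 5) + 2 by ring,
        h2, h1, h0]
      simp [abg]; try ring
    · rw [hc, S_succ,
        show (m : ZMod 5) + 1 - 1 = (m : ZMod 5) by ring,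
        h0, h1', h2']
      simp [abg]; try ring
    · rw [hc, S_succ,
        show (m : ZMod 5) + 1 + 2 = (m : ZMod 5) - 2 by linear_combination five,
        show (m : ZMod 5) - 2 - 1 = (m : ZMod 5) + 2 by linear_combination -five,
        show (m : ZMod 5) - 2 - 2 = (m : ZMod 5) + 1 by linear_combination -five,
        h2', h2, h1]
      simp [abg]; try ring
    · rw [hc, S_succ,
        show (m : ZMod 5) + 1 - 2 = (m : ZMod 5) - 1 by ring,
        show (m : ZMod 5) - 1 - 1 = (m : ZMod 5) - 2 by ring,
        show (m : ZMod 5) - 1 - 2 = (m : ZMod 5) + 2 by linear_combination -five,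
        h1', h2', h2]
      simp [abg]; try ring

lemma support_subset (m : ℕ) (c : ℤ) :
    (Function.support fun j : ℤ => trinom m (5 * j + c)) ⊆
      ↑(Finset.Icc (-(m : ℤ) - c.natAbs) ((m : ℤ) + c.natAbs)) := by
  intro j hj
  simp only [Function.mem_support] at hj
  simp only [Finset.coe_Icc, Set.mem_Icc]
  by_contra hcon
  apply hj
  unfold trinom
  split_ifs with hpos
  · apply coeff_zero_of_big
    omega
  · rfl

lemma bridge (m : ℕ) (c : ℤ) :
    ∑ᶠ j : ℤ, trinom m (5 * j + c) = S m (((m : ℤ) + c : ℤ) : ZMod 5) := by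
  rw [finsum_eq_finset_sum_of_support_subset _ (support_subset m c)]
  have step1 : ∀ j ∈ Finset.Icc (-(m : ℤ) - c.natAbs) ((m : ℤ) + c.natAbs),
      trinom m (5 * j + c) = ∑ i ∈ Finset.range (2 * m + 1),
        if (i : ℤ) = (m : ℤ) + (5 * j + c)
          then ((1 + X + X ^ 2 : Polynomial ℤ) ^ m).coeff i else 0 := by
    intro j _
    unfold trinom
    rcases le_or_gt 0 ((m : ℤ) + (5 * j + c)) with hpos | hneg
    · rw [if_pos hpos]
      have hiff : ∀ i : ℕ, ((i : ℤ) = (m : ℤ) + (5 * j + c)) =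
          (i = ((m : ℤ) + (5 * j + c)).toNat) := by
        intro i; apply propext; constructor <;> intro h <;> omega
      simp only [hiff]
      rw [Finset.sum_ite_eq' (Finset.range (2 * m + 1)) (((m : ℤ) + (5 * j + c)).toNat)
        (fun i => ((1 + X + X ^ 2 : Polynomial ℤ) ^ m).coeff i)]
      by_cases hmem : ((m : ℤ) + (5 * j + c)).toNat ∈ Finset.range (2 * m + 1)
      · rw [if_pos hmem]
      · rw [if_neg hmem]
        apply coeff_zero_of_big
        simp only [Finset.mem_range] at hmem
        omega
    · rw [if_neg (not_le.mpr hneg)]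
      symm; apply Finset.sum_eq_zero
      intro i _
      rw [if_neg]
      intro h
      omega
  rw [Finset.sum_congr rfl step1, Finset.sum_comm]
  have step2 : ∀ i ∈ Finset.range (2 * m + 1),
      (∑ j ∈ Finset.Icc (-(m : ℤ) - c.natAbs) ((m : ℤ) + c.natAbs),
        if (i : ℤ) = (m : ℤ) + (5 * j + c)
          then ((1 + X + X ^ 2 : Polynomial ℤ) ^ m).coeff i else 0)
      = if ((i : ZMod 5) = (((m : ℤ) + c : ℤ) : ZMod 5))
          then ((1 + X + X ^ 2 : Polynomial ℤ) ^ m).coeff i else 0 := by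
    intro i hi
    simp only [Finset.mem_range] at hi
    by_cases h5 : ((i : ZMod 5) = (((m : ℤ) + c : ℤ) : ZMod 5))
    · have h5' := h5
      push_cast at h5'
      have hz : ((((i : ℤ) - ((m : ℤ) + c)) : ℤ) : ZMod 5) = 0 := by
        push_cast
        rw [h5']; ring
      have hdvd : (5 : ℤ) ∣ ((i : ℤ) - ((m : ℤ) + c)) :=
        (ZMod.intCast_zmod_eq_zero_iff_dvd _ 5).mp hz
      obtain ⟨j0, hj0⟩ := hdvd
      have hiff : ∀ j : ℤ, ((i : ℤ) = (m : ℤ) + (5 * j + c)) = (j = j0) := by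
        intro j; apply propext; constructor <;> intro h <;> omega
      simp only [hiff]
      rw [Finset.sum_ite_eq' _ j0 (fun _ => ((1 + X + X ^ 2 : Polynomial ℤ) ^ m).coeff i)]
      rw [if_pos, if_pos h5]
      simp only [Finset.mem_Icc]
      omega
    · rw [if_neg h5]
      apply Finset.sum_eq_zero
      intro j _
      rw [if_neg]
      intro heq
      apply h5
      have h2 := congrArg (fun z : ℤ => (z : ZMod 5)) heq
      push_cast at h2 ⊢
      have five : (5 : ZMod 5) = 0 := by decide
      rw [h2, five]; ring
  rw [Finset.sum_congr rfl step2, ← S_eq_sum]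

lemma abg_three (m : ℕ) :
    (abg (m + 3)).1 - (abg (m + 3)).2.1 =
      ((abg (m + 1)).1 - (abg (m + 1)).2.1) + ((abg (m + 2)).1 - (abg (m + 2)).2.1) := by
  show (abg (m + 1 + 1 + 1)).1 - (abg (m + 1 + 1 + 1)).2.1 =
      ((abg (m + 1)).1 - (abg (m + 1)).2.1) + ((abg (m + 1 + 1)).1 - (abg (m + 1 + 1)).2.1)
  simp only [abg]
  ring

lemma abg_fib : ∀ n : ℕ,
    (abg (n + 1)).1 - (abg (n + 1)).2.1 = (Nat.fib n : ℤ) ∧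
    (abg (n + 2)).1 - (abg (n + 2)).2.1 = (Nat.fib (n + 1) : ℤ) := by
  intro n
  induction n with
  | zero =>
    refine ⟨by simp [abg], ?_⟩
    show (abg (0 + 1 + 1)).1 - (abg (0 + 1 + 1)).2.1 = _
    simp [abg]
  | succ n ih =>
    obtain ⟨ih1, ih2⟩ := ih
    refine ⟨ih2, ?_⟩
    have := abg_three n
    rw [show n + 1 + 2 = n + 3 from rfl, this, ih1, ih2, Nat.fib_add_two]
    push_cast
    ring

/-- Identity (9): `F_n = Σ_{j ∈ ℤ} [T(n+1, 5j) - T(n+1, 5j-1)]` for `n ≥ 1`. -/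
theorem fib_trinomial_sum (n : ℕ) (hn : 1 ≤ n) :
    (Nat.fib n : ℤ) = ∑ᶠ j : ℤ, (trinom (n + 1) (5 * j) - trinom (n + 1) (5 * j - 1)) := by
  have hf : (Function.support fun j : ℤ => trinom (n + 1) (5 * j)).Finite := by
    have he : (fun j : ℤ => trinom (n + 1) (5 * j)) =
        fun j : ℤ => trinom (n + 1) (5 * j + 0) := by
      funext j; congr 1; try ring
    rw [he]
    exact Set.Finite.subset (Finset.finite_toSet _) (support_subset (n + 1) 0)
  have hg : (Function.support fun j : ℤ => trinom (n + 1) (5 * j - 1)).Finite := by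
    have he : (fun j : ℤ => trinom (n + 1) (5 * j - 1)) =
        fun j : ℤ => trinom (n + 1) (5 * j + (-1)) := by
      funext j; congr 1; try ring
    rw [he]
    exact Set.Finite.subset (Finset.finite_toSet _) (support_subset (n + 1) (-1))
  rw [finsum_sub_distrib hf hg]
  have b1 : ∑ᶠ j : ℤ, trinom (n + 1) (5 * j) = S (n + 1) (((n + 1 : ℕ) : ZMod 5)) := by
    rw [show ∑ᶠ j : ℤ, trinom (n + 1) (5 * j) = ∑ᶠ j : ℤ, trinom (n + 1) (5 * j + 0) from
      finsum_congr (fun j => by congr 1; try ring), bridge]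
    all_goals exact congrArg (S (n + 1)) (by push_cast; ring)
  have b2 : ∑ᶠ j : ℤ, trinom (n + 1) (5 * j - 1) = S (n + 1) (((n + 1 : ℕ) : ZMod 5) - 1) := by
    rw [show ∑ᶠ j : ℤ, trinom (n + 1) (5 * j - 1) = ∑ᶠ j : ℤ, trinom (n + 1) (5 * j + (-1)) from
      finsum_congr (fun j => by congr 1; try ring), bridge]
    all_goals exact congrArg (S (n + 1)) (by push_cast; ring)
  rw [b1, b2]
  obtain ⟨h0, _, h1', _, _⟩ := quint (n + 1)
  rw [h0, h1', abg_fib n |>.1]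
end

section
/- For every natural number n ≥ 1, F_{n+1} = Σ_{j ∈ ℤ} [ T(n, 5j) - T(n, 5j-2) ], where T(n,k) denotes the trinomial coefficient. -/
open LaurentPolynomial

namespace LaurentPolynomial

variable {R : Type*}

section Semiring

variable [Semiring R] {m : ℤ}

noncomputable def residueSum (m r : ℤ) (f : R[T;T⁻¹]) : R :=
  ∑ᶠ j : ℤ, f.coeff (m * j + r)

theorem hasFiniteSupport_coeff_mul_add (hm : m ≠ 0) (r : ℤ) (f : R[T;T⁻¹]) :
    Function.HasFiniteSupport fun j : ℤ ↦ f.coeff (m * j + r) :=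
  f.coeff.hasFiniteSupport.preimage fun _ _ _ _ h ↦ by simpa [hm] using h

theorem residueSum_add (hm : m ≠ 0) (r : ℤ) (f g : R[T;T⁻¹]) :
    residueSum m r (f + g) = residueSum m r f + residueSum m r g :=
  finsum_add_distrib (hasFiniteSupport_coeff_mul_add hm r f) (hasFiniteSupport_coeff_mul_add hm r g)

theorem residueSum_mul_T (r : ℤ) (f : R[T;T⁻¹]) (k : ℤ) :
    residueSum m r (f * T k) = residueSum m (r - k) f := by
  simp only [residueSum, T, AddMonoidAlgebra.coeff_mul_single_apply, mul_one, add_sub_assoc,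
    ← sub_eq_add_neg]

theorem residueSum_add_modulus (r : ℤ) (f : R[T;T⁻¹]) :
    residueSum m (r + m) f = residueSum m r f := by
  rw [residueSum, residueSum, ← finsum_comp_equiv (Equiv.addRight (-1))]
  refine finsum_congr fun j ↦ congrArg f.coeff ?_
  simp only [Equiv.coe_addRight]
  ring

theorem residueSum_T (hm : m ≠ 0) (r k : ℤ) :
    residueSum m r (T k : R[T;T⁻¹]) = if m ∣ k - r then 1 else 0 := by
  simp only [residueSum, T_apply]
  split_ifs with h
  · obtain ⟨c, hc⟩ := h
    rw [finsum_eq_single _ c fun j hj ↦ if_neg fun h ↦ hj ?_, if_pos (by linarith)]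
    exact (mul_left_cancel₀ hm (by linarith)).symm
  · exact finsum_eq_zero_of_forall_eq_zero fun j ↦ if_neg fun h' ↦ h ⟨j, by linarith⟩

end Semiring

theorem residueSum_invert [CommSemiring R] (m r : ℤ) (f : R[T;T⁻¹]) :
    residueSum m r (invert f) = residueSum m (-r) f := by
  rw [residueSum, residueSum, ← finsum_comp_equiv (Equiv.neg ℤ)]
  refine finsum_congr fun j ↦ ?_
  simp only [Equiv.neg_apply, invert_apply]
  congr 1
  ring

noncomputable def trinomialLaurent : ℤ[T;T⁻¹] := T (-1) + 1 + T 1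

theorem trinomialLaurent_eq_T_mul_toLaurent :
    trinomialLaurent = T (-1) * Polynomial.toLaurent (1 + Polynomial.X + Polynomial.X ^ 2) := by
  simp only [trinomialLaurent, map_add, map_one, map_pow, Polynomial.toLaurent_X, T_pow, ← T_add,
    mul_add, mul_one]
  norm_num

theorem invert_trinomialLaurent : invert trinomialLaurent = trinomialLaurent := by
  simp only [trinomialLaurent, map_add, invert_T, map_one, neg_neg]
  abel

theorem residueSum_mul_trinomialLaurent {m : ℤ} (hm : m ≠ 0) (r : ℤ) (f : ℤ[T;T⁻¹]) :
    residueSum m r (f * trinomialLaurent) =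
      residueSum m (r + 1) f + residueSum m r f + residueSum m (r - 1) f := by
  rw [trinomialLaurent, mul_add, mul_add, mul_one, residueSum_add hm, residueSum_add hm,
    residueSum_mul_T, residueSum_mul_T, sub_neg_eq_add]

theorem residueSum_trinomialLaurent_pow_neg (m r : ℤ) (n : ℕ) :
    residueSum m (-r) (trinomialLaurent ^ n) = residueSum m r (trinomialLaurent ^ n) := by
  rw [← residueSum_invert, map_pow, invert_trinomialLaurent]

theorem residueSum_five_trinomialLaurent_pow_sub_eq_fib (n : ℕ) :
    residueSum 5 0 (trinomialLaurent ^ n) - residueSum 5 2 (trinomialLaurent ^ n) =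
        Nat.fib (n + 1) ∧
      residueSum 5 1 (trinomialLaurent ^ n) - residueSum 5 2 (trinomialLaurent ^ n) = Nat.fib n := by
  have h5 : (5 : ℤ) ≠ 0 := by norm_num
  induction n with
  | zero =>
    simp only [pow_zero, ← T_zero, residueSum_T h5]
    norm_num
  | succ n ih =>
    have h4 := residueSum_trinomialLaurent_pow_neg 5 1 n
    have h3 : residueSum 5 3 (trinomialLaurent ^ n) = residueSum 5 2 (trinomialLaurent ^ n) := by
      rw [← residueSum_trinomialLaurent_pow_neg, ← residueSum_add_modulus]
      norm_num
    simp only [pow_succ, residueSum_mul_trinomialLaurent h5]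
    norm_num [h3, h4, Nat.fib_add_two]
    omega

end LaurentPolynomial

theorem trinom_eq_coeff_trinomialLaurent_pow (n : ℕ) (k : ℤ) :
    trinom n k = (trinomialLaurent ^ n).coeff k := by
  rw [trinomialLaurent_eq_T_mul_toLaurent, mul_pow, T_pow, ← map_pow, T,
    AddMonoidAlgebra.coeff_single_mul_apply, one_mul, coeff_toLaurent, trinom,
    show -((n : ℤ) * -1) + k = n + k by ring]
  split_ifs with h
  · lift (n : ℤ) + k to ℕ using h with m
    exact (Finsupp.mapDomain_apply Nat.cast_injective _ m).symm
  · refine (Finsupp.mapDomain_of_notMem_range _ _ ?_).symm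
    rintro ⟨m, hm⟩
    exact h (hm ▸ Int.natCast_nonneg m)

theorem fib_trinomial_sum'_general (n : ℕ) :
    (Nat.fib (n + 1) : ℤ) = ∑ᶠ j : ℤ, (trinom n (5 * j) - trinom n (5 * j - 2)) := by
  have h5 : (5 : ℤ) ≠ 0 := by norm_num
  have h := (residueSum_five_trinomialLaurent_pow_sub_eq_fib n).1
  rw [← residueSum_trinomialLaurent_pow_neg 5 2] at h
  simp only [residueSum, add_zero, ← sub_eq_add_neg] at h
  simp only [trinom_eq_coeff_trinomialLaurent_pow]
  rw [← h, finsum_sub_distrib]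
  · simpa using hasFiniteSupport_coeff_mul_add h5 0 (trinomialLaurent ^ n)
  · simpa [← sub_eq_add_neg] using hasFiniteSupport_coeff_mul_add h5 (-2) (trinomialLaurent ^ n)

/-- Identity (10): `F_{n+1} = Σ_{j ∈ ℤ} [T(n, 5j) - T(n, 5j-2)]` for `n ≥ 1`. -/
theorem fib_trinomial_sum' (n : ℕ) (hn : 1 ≤ n) :
    (Nat.fib (n + 1) : ℤ) = ∑ᶠ j : ℤ, (trinom n (5 * j) - trinom n (5 * j - 2)) :=
  fib_trinomial_sum'_general n
end

section
/- For every n ≥ 1, F_{2n-1} = Σ_{j=0}^{∞} [ ((5j+1)/n)·C(2n, n-5j-1) - ((5j+4)/n)·C(2n, n-5j-4) ]. -/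
/-- Binomial coefficient `C(m, j)` with integer lower index, zero when `j < 0`. -/
def icho (m : ℕ) (j : ℤ) : ℤ := if 0 ≤ j then (m.choose j.toNat : ℤ) else 0

/-- per-term Catalan-style identity -/
lemma key (v k : ℕ) (hk : 1 ≤ k) :
    (k : ℤ) * icho (2*v+2) ((v:ℤ)+1-k)
      = ((v:ℤ)+1) * (icho (2*v+1) ((v:ℤ)+1-k) - icho (2*v+1) ((v:ℤ)-k)) := by
  by_cases h : k ≤ v + 1
  · rcases Nat.eq_or_lt_of_le h with he | hlt
    · subst he
      simp [icho, show ((v:ℤ)+1-(v+1) : ℤ) = 0 from by ring,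
        show ¬ (0 : ℤ) ≤ (v:ℤ) - (v+1) from by omega]
    · -- k ≤ v; set b := v - k
      have hkv : k ≤ v := by omega
      set b : ℕ := v - k with hb
      have h1 : ((v:ℤ)+1-k) = ((b+1 : ℕ) : ℤ) := by push_cast; omega
      have h2 : ((v:ℤ)-k) = ((b : ℕ) : ℤ) := by push_cast; omega
      rw [h1, h2]
      have e1 : icho (2*v+2) ((b+1 : ℕ) : ℤ) = ((2*v+2).choose (b+1) : ℤ) := by
        simp [icho]; omega
      have e2 : icho (2*v+1) ((b+1 : ℕ) : ℤ) = ((2*v+1).choose (b+1) : ℤ) := by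
        simp [icho]; omega
      have e3 : icho (2*v+1) ((b : ℕ) : ℤ) = ((2*v+1).choose b : ℤ) := by
        simp [icho]
      rw [e1, e2, e3]
      have hs : ((2*v+2) * (2*v+1).choose b : ℤ) = ((2*v+2).choose (b+1) : ℤ) * (b+1) := by
        have := Nat.add_one_mul_choose_eq (2*v+1) b
        have := congrArg (Nat.cast (R := ℤ)) this
        push_cast at this ⊢
        convert this using 2 <;> push_cast <;> ring
      have hp : ((2*v+2).choose (b+1) : ℤ) = (2*v+1).choose b + (2*v+1).choose (b+1) := by
        have : (2*v+2).choose (b+1) = (2*v+1).choose b + (2*v+1).choose (b+1) :=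
          Nat.choose_succ_succ (2*v+1) b
        exact_mod_cast this
      have hkb : (k : ℤ) = (v : ℤ) - b := by push_cast; omega
      rw [hkb, hp]
      rw [hp] at hs
      linarith [hs]
  · have h1 : ¬ (0:ℤ) ≤ (v:ℤ)+1-k := by push_cast; omega
    have h2 : ¬ (0:ℤ) ≤ (v:ℤ)-k := by push_cast; omega
    simp only [icho, if_neg h1, if_neg h2, mul_zero, sub_self]

lemma reindex (m d v : ℕ) (hd1 : 1 ≤ d) (hd5 : d ≤ 5) :
    (∑ j ∈ Finset.range (v+1), icho m ((v:ℤ)+1-d-5*j))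
      = ∑ k ∈ Finset.range (v+1), if (k+d) % 5 = (v+1) % 5 then (m.choose k : ℤ) else 0 := by
  have L1 : ∑ j ∈ (Finset.range (v+1)).filter (fun j => 5*j + d ≤ v+1),
      icho m ((v:ℤ)+1-d-5*j) = ∑ j ∈ Finset.range (v+1), icho m ((v:ℤ)+1-d-5*j) := by
    apply Finset.sum_filter_of_ne
    intro j hj hne
    by_contra hc
    exact hne (by simp only [icho, if_neg (show ¬ (0:ℤ) ≤ (v:ℤ)+1-d-5*j from by push_cast; omega)])
  have L2 : ∑ k ∈ (Finset.range (v+1)).filter (fun k => (k+d) % 5 = (v+1) % 5),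
      (if (k+d) % 5 = (v+1) % 5 then (m.choose k : ℤ) else 0)
      = ∑ k ∈ Finset.range (v+1), if (k+d) % 5 = (v+1) % 5 then (m.choose k : ℤ) else 0 := by
    apply Finset.sum_filter_of_ne
    intro k hk hne
    by_contra hc
    exact hne (by simp [hc])
  rw [← L1, ← L2]
  refine Finset.sum_bij' (fun j _ => v+1-d-5*j) (fun k _ => (v+1-d-k)/5) ?_ ?_ ?_ ?_ ?_
  · intro j hj
    simp only [Finset.mem_filter, Finset.mem_range] at hj ⊢
    omega
  · intro k hk
    simp only [Finset.mem_filter, Finset.mem_range] at hk ⊢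
    omega
  · intro j hj
    simp only [Finset.mem_filter, Finset.mem_range] at hj
    omega
  · intro k hk
    simp only [Finset.mem_filter, Finset.mem_range] at hk
    omega
  · intro j hj
    simp only [Finset.mem_filter, Finset.mem_range] at hj
    have hcond : (v+1-d-5*j + d) % 5 = (v+1) % 5 := by omega
    rw [if_pos hcond]
    have h0 : (0:ℤ) ≤ (v:ℤ)+1-d-5*j := by push_cast; omega
    have ht : ((v:ℤ)+1-d-5*j).toNat = v+1-d-5*j := by omega
    simp only [icho, if_pos h0, ht]


/-- residue-class binomial sum -/
def V (m r : ℕ) : ℤ := ∑ k ∈ Finset.range (m+1), if k % 5 = r % 5 then (m.choose k : ℤ) else 0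

lemma V_mod (m r s : ℕ) (h : r % 5 = s % 5) : V m r = V m s := by
  unfold V; rw [h]

lemma V_succ (m r : ℕ) : V (m+1) r = V m r + V m (r+4) := by
  unfold V
  rw [Finset.sum_range_succ' (fun k => if k % 5 = r % 5 then ((m+1).choose k : ℤ) else 0)]
  have h1 : ∀ k, (if (k+1) % 5 = r % 5 then ((m+1).choose (k+1) : ℤ) else 0)
      = (if (k+1) % 5 = r % 5 then (m.choose (k+1) : ℤ) else 0)
        + (if k % 5 = (r+4) % 5 then (m.choose k : ℤ) else 0) := by
    intro k
    have hc : (k+1) % 5 = r % 5 ↔ k % 5 = (r+4) % 5 := by omega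
    by_cases h : (k+1) % 5 = r % 5
    · rw [if_pos h, if_pos h, if_pos (hc.mp h), Nat.choose_succ_succ]
      push_cast; ring
    · rw [if_neg h, if_neg h, if_neg (fun hh => h (hc.mpr hh))]; ring
  rw [Finset.sum_congr rfl (fun k _ => h1 k), Finset.sum_add_distrib]
  have h2 : ∑ k ∈ Finset.range (m+1), (if (k+1) % 5 = r % 5 then (m.choose (k+1) : ℤ) else 0)
      = ∑ k ∈ Finset.range m, (if (k+1) % 5 = r % 5 then (m.choose (k+1) : ℤ) else 0) := by
    rw [Finset.sum_range_succ, Nat.choose_succ_self]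
    simp
  rw [h2]
  have h3 : (∑ k ∈ Finset.range (m+1), if k % 5 = r % 5 then (m.choose k : ℤ) else 0)
      = (if 0 % 5 = r % 5 then ((m+1).choose 0 : ℤ) else 0)
        + ∑ k ∈ Finset.range m, (if (k+1) % 5 = r % 5 then (m.choose (k+1) : ℤ) else 0) := by
    rw [Finset.sum_range_succ' (fun k => if k % 5 = r % 5 then (m.choose k : ℤ) else 0)]
    simp [add_comm]
  rw [h3]; ring

lemma Vp5 (m r : ℕ) : V m (r+5) = V m r := V_mod _ _ _ (by omega)
lemma Vp6 (m r : ℕ) : V m (r+6) = V m (r+1) := V_mod _ _ _ (by omega)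
lemma Vp7 (m r : ℕ) : V m (r+7) = V m (r+2) := V_mod _ _ _ (by omega)
lemma Vp8 (m r : ℕ) : V m (r+8) = V m (r+3) := V_mod _ _ _ (by omega)
lemma Vp9 (m r : ℕ) : V m (r+9) = V m (r+4) := V_mod _ _ _ (by omega)

lemma V2 (m r : ℕ) : V (m+2) r = V m r + V m (r+3) + 2 * V m (r+4) := by
  rw [V_succ, V_succ, V_succ]
  rw [show V m (r+4+4) = V m (r+3) from V_mod _ _ _ (by omega)]
  ring

lemma V4 (m r : ℕ) : V (m+4) r
    = V m r + V m (r+1) + 4 * V m (r+2) + 6 * V m (r+3) + 4 * V m (r+4) := by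
  rw [show m+4 = m+2+2 from rfl, V2, V2, V2, V2]
  simp only [show V m (r+3+3) = V m (r+1) from V_mod _ _ _ (by omega),
      show V m (r+3+4) = V m (r+2) from V_mod _ _ _ (by omega),
      show V m (r+4+4) = V m (r+3) from V_mod _ _ _ (by omega)]
  ring

lemma V6 (m r : ℕ) : V (m+6) r
    = 7 * V m r + 15 * V m (r+1) + 20 * V m (r+2) + 15 * V m (r+3) + 7 * V m (r+4) := by
  rw [show m+6 = m+4+2 from rfl, V2, V4, V4, V4]
  simp only [show V m (r+3+1) = V m (r+4) from V_mod _ _ _ (by omega),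
      show V m (r+3+2) = V m r from V_mod _ _ _ (by omega),
      show V m (r+3+3) = V m (r+1) from V_mod _ _ _ (by omega),
      show V m (r+3+4) = V m (r+2) from V_mod _ _ _ (by omega),
      show V m (r+4+4) = V m (r+3) from V_mod _ _ _ (by omega)]
  ring

/-- the key alternating combination -/
def Y (v : ℕ) : ℤ := V (2*v+1) v + V (2*v+1) (v+1) - V (2*v+1) (v+2) - V (2*v+1) (v+4)

lemma Y_rec (v : ℕ) : Y (v+3) = 7 * Y (v+2) - 13 * Y (v+1) + 4 * Y v := by
  unfold Y
  rw [show 2*(v+3)+1 = (2*v+1)+6 from by ring, show 2*(v+2)+1 = (2*v+1)+4 from by ring,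
      show 2*(v+1)+1 = (2*v+1)+2 from by ring]
  rw [V6, V6, V6, V6, V4, V4, V4, V4, V2, V2, V2, V2]
  set m := 2*v+1
  simp only [show v+3+1 = v+4 from rfl, show v+3+2 = v+5 from rfl, show v+3+3 = v+6 from rfl,
      show v+3+4 = v+7 from rfl, show v+4+1 = v+5 from rfl, show v+4+2 = v+6 from rfl,
      show v+4+3 = v+7 from rfl, show v+4+4 = v+8 from rfl, show v+2+1 = v+3 from rfl,
      show v+2+2 = v+4 from rfl, show v+2+3 = v+5 from rfl, show v+2+4 = v+6 from rfl,
      show v+1+1 = v+2 from rfl, show v+1+2 = v+3 from rfl, show v+1+3 = v+4 from rfl,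
      show v+1+4 = v+5 from rfl, show v+5+1 = v+6 from rfl, show v+5+2 = v+7 from rfl,
      show v+5+3 = v+8 from rfl, show v+5+4 = v+9 from rfl, show v+6+1 = v+7 from rfl,
      show v+6+2 = v+8 from rfl, show v+6+3 = v+9 from rfl, show v+6+4 = v+10 from rfl,
      show v+7+1 = v+8 from rfl, show v+7+2 = v+9 from rfl, show v+7+3 = v+10 from rfl,
      show v+7+4 = v+11 from rfl]
  simp only [Vp5, Vp6, Vp7, Vp8, Vp9,
      show ∀ mm, V mm (v+10) = V mm v from fun mm => V_mod _ _ _ (by omega),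
      show ∀ mm, V mm (v+11) = V mm (v+1) from fun mm => V_mod _ _ _ (by omega)]
  ring

lemma fib_step (k : ℕ) : (Nat.fib (k+4) : ℤ) = 3 * Nat.fib (k+2) - Nat.fib k := by
  rw [show k+4 = (k+2)+2 from rfl, Nat.fib_add_two,
     show k+2+1 = (k+1)+2 from rfl, Nat.fib_add_two,
     Nat.fib_add_two, show k+1+1 = k+2 from rfl, Nat.fib_add_two]
  push_cast; ring

lemma Y_eq_fib : ∀ v : ℕ, Y v = 2 * Nat.fib (2*v+1) := by
  have key : ∀ v : ℕ, Y v = 2 * Nat.fib (2*v+1) ∧ Y (v+1) = 2 * Nat.fib (2*(v+1)+1)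
      ∧ Y (v+2) = 2 * Nat.fib (2*(v+2)+1) := by
    intro v
    induction v with
    | zero =>
      refine ⟨?_, ?_, ?_⟩ <;> · unfold Y V; decide
    | succ w ih =>
      obtain ⟨h0, h1, h2⟩ := ih
      refine ⟨h1, h2, ?_⟩
      rw [show w+1+2 = w+3 from rfl, Y_rec, h0, h1, h2]
      have e1 : (Nat.fib (2*(w+3)+1) : ℤ) = 3 * Nat.fib (2*(w+2)+1) - Nat.fib (2*(w+1)+1) := by
        have := fib_step (2*(w+1)+1); rw [show 2*(w+1)+1+4 = 2*(w+3)+1 from by ring,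
          show 2*(w+1)+1+2 = 2*(w+2)+1 from by ring] at this; exact this
      have e2 : (Nat.fib (2*(w+2)+1) : ℤ) = 3 * Nat.fib (2*(w+1)+1) - Nat.fib (2*w+1) := by
        have := fib_step (2*w+1); rw [show 2*w+1+4 = 2*(w+2)+1 from by ring,
          show 2*w+1+2 = 2*(w+1)+1 from by ring] at this; exact this
      rw [e1, e2]; ring
  exact fun v => (key v).1

/-- signed residue-class indicator times binomial coefficient -/
def G (v k : ℕ) : ℤ :=
  (if (k+1) % 5 = (v+1) % 5 then ((2*v+1).choose k : ℤ) else 0)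
  - (if (k+2) % 5 = (v+1) % 5 then ((2*v+1).choose k : ℤ) else 0)
  - (if (k+4) % 5 = (v+1) % 5 then ((2*v+1).choose k : ℤ) else 0)
  + (if (k+5) % 5 = (v+1) % 5 then ((2*v+1).choose k : ℤ) else 0)

lemma Y_eq_sumG (v : ℕ) : Y v = ∑ k ∈ Finset.range (2*v+2), G v k := by
  unfold Y V G
  rw [show 2*v+1+1 = 2*v+2 from rfl]
  rw [← Finset.sum_add_distrib, ← Finset.sum_sub_distrib, ← Finset.sum_sub_distrib]
  apply Finset.sum_congr rfl
  intro k _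
  have c1 : (k % 5 = v % 5) ↔ ((k+1) % 5 = (v+1) % 5) := by omega
  have c2 : (k % 5 = (v+1) % 5) ↔ ((k+5) % 5 = (v+1) % 5) := by omega
  have c3 : (k % 5 = (v+2) % 5) ↔ ((k+4) % 5 = (v+1) % 5) := by omega
  have c4 : (k % 5 = (v+4) % 5) ↔ ((k+2) % 5 = (v+1) % 5) := by omega
  rw [if_congr c1 rfl rfl, if_congr c2 rfl rfl, if_congr c3 rfl rfl, if_congr c4 rfl rfl]
  ring

lemma G_reflect (v k : ℕ) (hk : k ≤ v) : G v (2*v+1-k) = G v k := by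
  unfold G
  have hsym : (2*v+1).choose (2*v+1-k) = (2*v+1).choose k :=
    Nat.choose_symm (by omega)
  rw [hsym]
  have c1 : ((2*v+1-k+1) % 5 = (v+1) % 5) ↔ ((k+5) % 5 = (v+1) % 5) := by omega
  have c2 : ((2*v+1-k+2) % 5 = (v+1) % 5) ↔ ((k+4) % 5 = (v+1) % 5) := by omega
  have c3 : ((2*v+1-k+4) % 5 = (v+1) % 5) ↔ ((k+2) % 5 = (v+1) % 5) := by omega
  have c4 : ((2*v+1-k+5) % 5 = (v+1) % 5) ↔ ((k+1) % 5 = (v+1) % 5) := by omega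
  rw [if_congr c1 rfl rfl, if_congr c2 rfl rfl, if_congr c3 rfl rfl, if_congr c4 rfl rfl]
  ring

lemma Y_double (v : ℕ) : Y v = 2 * ∑ k ∈ Finset.range (v+1), G v k := by
  rw [Y_eq_sumG, show 2*v+2 = (v+1) + (v+1) from by ring, Finset.sum_range_add]
  have : ∑ k ∈ Finset.range (v+1), G v (v+1+k) = ∑ k ∈ Finset.range (v+1), G v k := by
    rw [← Finset.sum_range_reflect (fun k => G v (v+1+k)) (v+1)]
    apply Finset.sum_congr rfl
    intro k hk
    simp only [Finset.mem_range] at hk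
    rw [show v+1+(v+1-1-k) = 2*v+1-k from by omega, G_reflect v k (by omega)]
  rw [this]; ring

lemma sumG_eq_fib (v : ℕ) : ∑ k ∈ Finset.range (v+1), G v k = Nat.fib (2*v+1) := by
  have h1 := Y_double v
  have h2 := Y_eq_fib v
  omega

lemma main_int (v : ℕ) :
    ∑ j ∈ Finset.range (v+1),
      ((5*(j:ℤ)+1) * icho (2*v+2) ((v:ℤ)-5*j) - (5*(j:ℤ)+4) * icho (2*v+2) ((v:ℤ)-5*j-3))
      = ((v:ℤ)+1) * Nat.fib (2*v+1) := by
  have step : ∀ j ∈ Finset.range (v+1),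
      (5*(j:ℤ)+1) * icho (2*v+2) ((v:ℤ)-5*j) - (5*(j:ℤ)+4) * icho (2*v+2) ((v:ℤ)-5*j-3)
      = ((v:ℤ)+1) * ((icho (2*v+1) ((v:ℤ)+1-((1:ℕ):ℤ)-5*j) - icho (2*v+1) ((v:ℤ)+1-((2:ℕ):ℤ)-5*j))
          - (icho (2*v+1) ((v:ℤ)+1-((4:ℕ):ℤ)-5*j) - icho (2*v+1) ((v:ℤ)+1-((5:ℕ):ℤ)-5*j))) := by
    intro j _
    have e1 := key v (5*j+1) (by omega)
    have e2 := key v (5*j+4) (by omega)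
    rw [show (v:ℤ)+1-((5*j+1:ℕ):ℤ) = (v:ℤ)-5*j from by push_cast; ring,
        show (v:ℤ)-((5*j+1:ℕ):ℤ) = (v:ℤ)+1-((2:ℕ):ℤ)-5*j from by push_cast; ring,
        show ((5*j+1:ℕ):ℤ) = 5*(j:ℤ)+1 from by push_cast; ring] at e1
    rw [show (v:ℤ)+1-((5*j+4:ℕ):ℤ) = (v:ℤ)-5*j-3 from by push_cast; ring,
        show (v:ℤ)-((5*j+4:ℕ):ℤ) = (v:ℤ)+1-((5:ℕ):ℤ)-5*j from by push_cast; ring,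
        show ((5*j+4:ℕ):ℤ) = 5*(j:ℤ)+4 from by push_cast; ring] at e2
    rw [e1, e2]
    rw [show (v:ℤ)-5*j-3 = (v:ℤ)+1-((4:ℕ):ℤ)-5*j from by push_cast; ring,
        show (v:ℤ)-5*j = (v:ℤ)+1-((1:ℕ):ℤ)-5*j from by push_cast; ring]
    ring
  rw [Finset.sum_congr rfl step, ← Finset.mul_sum]
  congr 1
  have expand : ∀ j : ℕ,
      ((icho (2*v+1) ((v:ℤ)+1-((1:ℕ):ℤ)-5*j) - icho (2*v+1) ((v:ℤ)+1-((2:ℕ):ℤ)-5*j))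
        - (icho (2*v+1) ((v:ℤ)+1-((4:ℕ):ℤ)-5*j) - icho (2*v+1) ((v:ℤ)+1-((5:ℕ):ℤ)-5*j)))
      = (icho (2*v+1) ((v:ℤ)+1-((1:ℕ):ℤ)-5*j) - icho (2*v+1) ((v:ℤ)+1-((2:ℕ):ℤ)-5*j))
        - icho (2*v+1) ((v:ℤ)+1-((4:ℕ):ℤ)-5*j) + icho (2*v+1) ((v:ℤ)+1-((5:ℕ):ℤ)-5*j) :=
    fun j => by ring
  rw [Finset.sum_congr rfl (fun j _ => expand j)]
  rw [Finset.sum_add_distrib, Finset.sum_sub_distrib, Finset.sum_sub_distrib]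
  rw [reindex (2*v+1) 1 v (by norm_num) (by norm_num),
      reindex (2*v+1) 2 v (by norm_num) (by norm_num),
      reindex (2*v+1) 4 v (by norm_num) (by norm_num),
      reindex (2*v+1) 5 v (by norm_num) (by norm_num)]
  rw [← Finset.sum_sub_distrib, ← Finset.sum_sub_distrib, ← Finset.sum_add_distrib]
  rw [show (∑ k ∈ Finset.range (v+1),
      ((if (k+1) % 5 = (v+1) % 5 then ((2*v+1).choose k : ℤ) else 0)
        - (if (k+2) % 5 = (v+1) % 5 then ((2*v+1).choose k : ℤ) else 0)
        - (if (k+4) % 5 = (v+1) % 5 then ((2*v+1).choose k : ℤ) else 0)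
        + (if (k+5) % 5 = (v+1) % 5 then ((2*v+1).choose k : ℤ) else 0)))
      = ∑ k ∈ Finset.range (v+1), G v k from Finset.sum_congr rfl (fun k _ => rfl)]
  rw [sumG_eq_fib]

/-- Identity (13):
`F_{2n-1} = Σ_{j≥0} [((5j+1)/n)·C(2n, n-5j-1) - ((5j+4)/n)·C(2n, n-5j-4)]` for `n ≥ 1`. -/
theorem fib_odd_catalan_formula (n : ℕ) (hn : 1 ≤ n) :
    (Nat.fib (2 * n - 1) : ℚ) =
      ∑ᶠ j : ℕ,
        ((5 * j + 1 : ℚ) / n * (icho (2 * n) ((n : ℤ) - 5 * j - 1) : ℚ) -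
          (5 * j + 4 : ℚ) / n * (icho (2 * n) ((n : ℤ) - 5 * j - 4) : ℚ)) := by
  obtain ⟨v, rfl⟩ : ∃ v, n = v + 1 := ⟨n - 1, by omega⟩
  have hzero : ∀ j : ℕ, v + 1 ≤ j →
      ((5 * j + 1 : ℚ) / (v+1 : ℕ) * (icho (2 * (v+1)) (((v+1 : ℕ) : ℤ) - 5 * j - 1) : ℚ) -
        (5 * j + 4 : ℚ) / (v+1 : ℕ) * (icho (2 * (v+1)) (((v+1 : ℕ) : ℤ) - 5 * j - 4) : ℚ)) = 0 := by
    intro j hj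
    have h1 : ¬ (0:ℤ) ≤ ((v+1 : ℕ) : ℤ) - 5 * j - 1 := by push_cast; omega
    have h2 : ¬ (0:ℤ) ≤ ((v+1 : ℕ) : ℤ) - 5 * j - 4 := by push_cast; omega
    simp only [icho, if_neg h1, if_neg h2]
    norm_num
  rw [finsum_eq_sum_of_support_subset _ (s := Finset.range (v+1))
      (by intro j hj
          simp only [Function.mem_support] at hj
          simp only [Finset.coe_range, Set.mem_Iio]
          by_contra hc
          exact hj (hzero j (by omega)))]
  have harg : ∀ j : ℕ, (((v+1 : ℕ) : ℤ) - 5 * j - 1) = ((v:ℤ) - 5*j) := by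
    intro j; push_cast; ring
  have harg2 : ∀ j : ℕ, (((v+1 : ℕ) : ℤ) - 5 * j - 4) = ((v:ℤ) - 5*j - 3) := by
    intro j; push_cast; ring
  have hstep : ∀ j ∈ Finset.range (v+1),
      ((5 * j + 1 : ℚ) / (v+1 : ℕ) * (icho (2 * (v+1)) (((v+1 : ℕ) : ℤ) - 5 * j - 1) : ℚ) -
        (5 * j + 4 : ℚ) / (v+1 : ℕ) * (icho (2 * (v+1)) (((v+1 : ℕ) : ℤ) - 5 * j - 4) : ℚ))
      = ((v:ℚ)+1)⁻¹ * (((5*(j:ℤ)+1) * icho (2*v+2) ((v:ℤ)-5*j)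
          - (5*(j:ℤ)+4) * icho (2*v+2) ((v:ℤ)-5*j-3) : ℤ) : ℚ) := by
    intro j _
    rw [harg j, harg2 j, show 2*(v+1) = 2*v+2 from by ring]
    have hv : ((v:ℚ)+1) ≠ 0 := by positivity
    push_cast
    field_simp
  rw [Finset.sum_congr rfl hstep, ← Finset.mul_sum]
  have hs : (∑ j ∈ Finset.range (v+1),
      (((5*(j:ℤ)+1) * icho (2*v+2) ((v:ℤ)-5*j)
        - (5*(j:ℤ)+4) * icho (2*v+2) ((v:ℤ)-5*j-3) : ℤ) : ℚ))
      = (((v:ℤ)+1) * Nat.fib (2*v+1) : ℤ) := by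
    rw [← Int.cast_sum, main_int v]
  rw [hs, show 2*(v+1)-1 = 2*v+1 from by omega]
  have hv : ((v:ℚ)+1) ≠ 0 := by positivity
  push_cast
  field_simp
end
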